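/- arXiv:0710.5457 — 9 statements merged into one kernel-verified Lean document; each statement's English description precedes it below -/
import Mathlib

section
/- Let X⁻ be a nonempty proper ideal of ℤ^r and define the Cubist subset X = X⁻ \ X⁻[-1], where X⁻[-1] = {x - (1,1,...,1) : x ∈ X⁻}. Then for each i ∈ ℤ, the set X_i = {x ∈ ℤ^(r-1) : (x,i) ∈ X and (x,i-1) ∈ X} is either empty or a Cubist subset of ℤ^(r-1), i.e. of the form Y⁻ \ Y⁻[-1] for some nonempty proper ideal Y⁻ of ℤ^(r-1). -/
/-- The translate `S[ζ] = {x + ζ(1,...,1) : x ∈ S}`. -/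
def trSet {r : ℕ} (S : Set (Fin r → ℤ)) (ζ : ℤ) : Set (Fin r → ℤ) :=
  (fun x => x + fun _ => ζ) '' S

/-- A Cubist subset of `ℤ^r`: `X = X⁻ \ X⁻[-1]` for a nonempty proper ideal `X⁻`. -/
def IsCubist {r : ℕ} (X : Set (Fin r → ℤ)) : Prop :=
  ∃ I : Set (Fin r → ℤ), I.Nonempty ∧ I ≠ Set.univ ∧ IsLowerSet I ∧ X = I \ trSet I (-1)

/-!
Writing `J = {x | (x, i) ∈ X⁻}` for the slice of the ideal at height `i`, the slice `X_i` of
`X = X⁻ \ X⁻[-1]` is exactly `J \ J[-1]`: both sides say `(x, i) ∈ X⁻` and `(x + 1, i) ∉ X⁻`,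
the remaining conditions `(x, i - 1) ∈ X⁻` and `(x + 1, i + 1) ∉ X⁻` being forced because
`X⁻` is a lower set. Since `J` is again a lower set, `J \ J[-1]` is Cubist unless `J` is empty
or everything, and in those two cases it is empty.
-/

lemma Fin.snoc_le_snoc_iff {α : Type*} [LE α] {n : ℕ} {x y : Fin n → α} {a b : α} :
    (Fin.snoc x a : Fin (n + 1) → α) ≤ Fin.snoc y b ↔ x ≤ y ∧ a ≤ b :=
  (Fin.snocOrderIso fun _ => α).le_iff_le (x := (a, x)) (y := (b, y)) |>.trans
    (Prod.mk_le_mk.trans and_comm)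

lemma Fin.snoc_add_const {α : Type*} [Add α] {n : ℕ} (x : Fin n → α) (a c : α) :
    (Fin.snoc x a + fun _ => c : Fin (n + 1) → α) = Fin.snoc (x + fun _ => c) (a + c) := by
  funext j
  refine Fin.lastCases ?_ (fun k => ?_) j <;> simp

lemma IsLowerSet.preimage_snoc {α : Type*} [Preorder α] {n : ℕ} {I : Set (Fin (n + 1) → α)}
    (hI : IsLowerSet I) (a : α) : IsLowerSet {x : Fin n → α | Fin.snoc x a ∈ I} :=
  hI.preimage fun _ _ hxy => Fin.snoc_le_snoc_iff.2 ⟨hxy, le_rfl⟩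

lemma mem_trSet {r : ℕ} {S : Set (Fin r → ℤ)} {ζ : ℤ} {y : Fin r → ℤ} :
    y ∈ trSet S ζ ↔ (y + fun _ => -ζ) ∈ S := by
  rw [trSet, Set.image_add_right]
  rfl

lemma trSet_univ {r : ℕ} (ζ : ℤ) : trSet (Set.univ : Set (Fin r → ℤ)) ζ = Set.univ :=
  Set.eq_univ_of_forall fun _ => mem_trSet.2 trivial

lemma diff_trSet_eq_empty_or_isCubist {r : ℕ} {J : Set (Fin r → ℤ)} (hJ : IsLowerSet J) :
    J \ trSet J (-1) = ∅ ∨ IsCubist (J \ trSet J (-1)) := by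
  rcases J.eq_empty_or_nonempty with rfl | hne
  · exact Or.inl (Set.empty_sdiff _)
  rcases eq_or_ne J Set.univ with rfl | hproper
  · exact Or.inl (by rw [trSet_univ, Set.sdiff_self])
  · exact Or.inr ⟨J, hne, hproper, hJ, rfl⟩

lemma slice_diff_trSet {r : ℕ} {I : Set (Fin (r + 1) → ℤ)} (hI : IsLowerSet I) (i : ℤ) :
    {x : Fin r → ℤ | Fin.snoc x i ∈ I \ trSet I (-1) ∧ Fin.snoc x (i - 1) ∈ I \ trSet I (-1)} =
      {x | Fin.snoc x i ∈ I} \ trSet {x | Fin.snoc x i ∈ I} (-1) := by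
  ext x
  have below {a : ℤ} (ha : a ≤ i) : Fin.snoc x i ∈ I → Fin.snoc x a ∈ I :=
    hI (Fin.snoc_le_snoc_iff.2 ⟨le_rfl, ha⟩)
  have above {a : ℤ} (ha : i ≤ a) :
      Fin.snoc (x + fun _ => 1) a ∈ I → Fin.snoc (x + fun _ => 1) i ∈ I :=
    hI (Fin.snoc_le_snoc_iff.2 ⟨le_rfl, ha⟩)
  simp only [Set.mem_ofPred_eq, Set.mem_sdiff, mem_trSet, neg_neg, Fin.snoc_add_const,
    sub_add_cancel]
  exact ⟨fun ⟨⟨hx, _⟩, _, hx₁⟩ => ⟨hx, hx₁⟩,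
    fun ⟨hx, hx₁⟩ => ⟨⟨hx, hx₁ ∘ above (by omega)⟩, ⟨below (by omega) hx, hx₁⟩⟩⟩

/-- slices `X_i = {x | (x,i) ∈ X and (x,i-1) ∈ X}` of a Cubist subset
are empty or Cubist. -/
theorem cubist_slice (r : ℕ) (X : Set (Fin (r + 1) → ℤ)) (hX : IsCubist X) (i : ℤ) :
    {x : Fin r → ℤ | Fin.snoc x i ∈ X ∧ Fin.snoc x (i - 1) ∈ X} = ∅ ∨
      IsCubist {x : Fin r → ℤ | Fin.snoc x i ∈ X ∧ Fin.snoc x (i - 1) ∈ X} := by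
  obtain ⟨I, -, -, hI, rfl⟩ := hX
  rw [slice_diff_trSet hI i]
  exact diff_trSet_eq_empty_or_isCubist (hI.preimage_snoc i)
end

section
/- A subset X of ℤ^r is Cubist (i.e. X = X⁻ \ X⁻[-1] for some nonempty proper ideal X⁻) if and only if X = X⁺ \ X⁺[1], where X⁺ is a nonempty proper coideal (upward closed set) of ℤ^r. -/
/-!
Complementation exchanges ideals and coideals, and translation by `(1,…,1)` commutes with it.
For an ideal `I`, the coideal `C = (I[-1])ᶜ` satisfies `C[1] = Iᶜ`, hence
`C \ C[1] = C ∩ I = I \ I[-1]`; symmetrically `I = (C[1])ᶜ` recovers an ideal from a coideal.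
-/

section Translate

variable {r : ℕ} (S : Set (Fin r → ℤ))

lemma trSet_eq_image_addRight (ζ : ℤ) :
    trSet S ζ = OrderIso.addRight (fun _ => ζ : Fin r → ℤ) '' S := rfl

lemma trSet_trSet (a b : ℤ) : trSet (trSet S a) b = trSet S (a + b) := by
  simp only [trSet, Set.image_image, add_assoc]
  rfl

lemma trSet_zero : trSet S 0 = S := by
  show (fun x => x + 0) '' S = S
  simp

lemma trSet_compl (ζ : ℤ) : trSet Sᶜ ζ = (trSet S ζ)ᶜ := by
  rw [trSet_eq_image_addRight, trSet_eq_image_addRight]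
  exact Set.image_compl_eq (OrderIso.addRight _).bijective

lemma compl_trSet_nonempty_iff (ζ : ℤ) : (trSet S ζ)ᶜ.Nonempty ↔ S ≠ Set.univ := by
  rw [← trSet_compl, trSet, Set.image_nonempty, Set.nonempty_compl]

lemma compl_trSet_ne_univ_iff (ζ : ℤ) : (trSet S ζ)ᶜ ≠ Set.univ ↔ S.Nonempty := by
  rw [← Set.nonempty_compl, compl_compl, trSet, Set.image_nonempty]

variable {S}

lemma isLowerSet_trSet (hS : IsLowerSet S) (ζ : ℤ) : IsLowerSet (trSet S ζ) :=
  trSet_eq_image_addRight S ζ ▸ hS.image _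

lemma isUpperSet_trSet (hS : IsUpperSet S) (ζ : ℤ) : IsUpperSet (trSet S ζ) :=
  trSet_eq_image_addRight S ζ ▸ hS.image _

variable (S)

lemma diff_trSet_neg_eq_compl_diff (ζ : ℤ) :
    S \ trSet S (-ζ) = (trSet S (-ζ))ᶜ \ trSet (trSet S (-ζ))ᶜ ζ := by
  rw [trSet_compl, trSet_trSet, neg_add_cancel, trSet_zero, Set.sdiff_compl,
    Set.sdiff_eq_compl_inter]

end Translate

/-- `X` is Cubist iff `X = X⁺ \ X⁺[1]` for a nonempty proper coideal `X⁺`. -/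
theorem cubist_iff_coideal (r : ℕ) (X : Set (Fin r → ℤ)) :
    IsCubist X ↔
      ∃ C : Set (Fin r → ℤ), C.Nonempty ∧ C ≠ Set.univ ∧ IsUpperSet C ∧
        X = C \ trSet C 1 := by
  constructor
  · rintro ⟨I, hI, hIne, hIlow, rfl⟩
    exact ⟨(trSet I (-1))ᶜ, (compl_trSet_nonempty_iff I _).2 hIne,
      (compl_trSet_ne_univ_iff I _).2 hI, (isLowerSet_trSet hIlow _).compl,
      diff_trSet_neg_eq_compl_diff I 1⟩
  · rintro ⟨C, hC, hCne, hCup, rfl⟩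
    refine ⟨(trSet C 1)ᶜ, (compl_trSet_nonempty_iff C _).2 hCne,
      (compl_trSet_ne_univ_iff C _).2 hC, (isUpperSet_trSet hCup _).compl, ?_⟩
    simpa only [neg_neg] using diff_trSet_neg_eq_compl_diff C (-1)
end

section
/- Let X be a Cubist subset of ℤ^r and x ∈ X. Then there is a unique index i ∈ {1,...,r} such that x + F_i ⊆ X, where F_i = {Σ_{j<i} a_j ε_j − Σ_{j>i} a_j ε_j : a_j ∈ {0,1}}. Moreover i = max{ j : x + ε_1 + ... + ε_{j−1} ∈ X }. -/
/-- The model facet `F_i = {∑_{j<i} a_j ε_j - ∑_{j>i} a_j ε_j : a_j ∈ {0,1}}`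
(indices `0`-based). -/
def FacetAt {r : ℕ} (i : Fin r) : Set (Fin r → ℤ) :=
  {z | z i = 0 ∧ ∀ j : Fin r, (j < i → (z j = 0 ∨ z j = 1)) ∧ (i < j → (z j = 0 ∨ z j = -1))}

/-- The model cone `C_i = ℤ_{≤0}^{i-1} × ℤ × ℤ_{≥0}^{r-i}` (indices `0`-based). -/
def ConeAt {r : ℕ} (i : Fin r) : Set (Fin r → ℤ) :=
  {z | (∀ j : Fin r, j < i → z j ≤ 0) ∧ (∀ j : Fin r, i < j → 0 ≤ z j)}

/-- The point `x + ε_1 + ... + ε_{i}` (0-based: sum of the first `i` basis vectors). -/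
def prefixPt {r : ℕ} (x : Fin r → ℤ) (i : Fin r) : Fin r → ℤ :=
  fun j => x j + if j < i then 1 else 0

/-- `i` is the largest index such that `x + ε_1 + ... + ε_{i-1} ∈ X`. -/
def IsMaxIdx {r : ℕ} (X : Set (Fin r → ℤ)) (x : Fin r → ℤ) (i : Fin r) : Prop :=
  prefixPt x i ∈ X ∧ ∀ j : Fin r, prefixPt x j ∈ X → j ≤ i

/-!
Write `𝟙` for the all-ones vector and `𝟙_S` for the indicator of `S ⊆ {0, …, r-1}`. Since
`X = I \ (I - 𝟙)` with `I` a lower set, `z ∈ X` iff `z ∈ I` and `z + 𝟙 ∉ I`. Every point of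
`x + F_i` lies between `x + 𝟙_{[0,i]} - 𝟙` and `x + 𝟙_{[0,i)}`, and both bounds lie in `x + F_i`,
so `x + F_i ⊆ X` exactly when `x + 𝟙_{[0,i)} ∈ I` and `x + 𝟙_{[0,i]} ∉ I`. Along the chain
`x = x + 𝟙_{[0,0)} ≤ x + 𝟙_{[0,0]} = x + 𝟙_{[0,1)} ≤ ⋯ ≤ x + 𝟙_{[0,r-1]} = x + 𝟙`, which starts
in `I` and ends outside it, this happens for exactly one `i`: the one whose prefix point
`x + 𝟙_{[0,i)}` is the last one inside `I`.
-/

open Set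

section Translate

variable {r : ℕ} {I : Set (Fin r → ℤ)}

theorem mem_trSet_neg_one_iff {z : Fin r → ℤ} : z ∈ trSet I (-1) ↔ z + 1 ∈ I := by
  constructor
  · rintro ⟨y, hy, rfl⟩
    convert hy using 1
    ext j
    simp
  · intro h
    exact ⟨z + 1, h, by ext j; simp⟩

theorem mem_diff_trSet_neg_one_iff {z : Fin r → ℤ} :
    z ∈ I \ trSet I (-1) ↔ z ∈ I ∧ z + 1 ∉ I := by
  rw [mem_sdiff, mem_trSet_neg_one_iff]

end Translate

section Facet

variable {r : ℕ} {i : Fin r} {f : Fin r → ℤ}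

theorem le_indicator_Iio_of_mem_facetAt (hf : f ∈ FacetAt i) : f ≤ (Iio i).indicator 1 := by
  intro j
  rcases lt_trichotomy j i with h | rfl | h
  · have := (hf.2 j).1 h
    simp only [indicator_apply, mem_Iio, h, if_true, Pi.one_apply]
    omega
  · simp [hf.1]
  · have := (hf.2 j).2 h
    simp only [indicator_apply, mem_Iio, not_lt_of_gt h, if_false]
    omega

theorem indicator_Iic_le_add_one_of_mem_facetAt (hf : f ∈ FacetAt i) :
    (Iic i).indicator 1 ≤ f + 1 := by
  intro j
  rcases lt_trichotomy j i with h | rfl | h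
  · have := (hf.2 j).1 h
    simp only [indicator_apply, mem_Iic, h.le, if_true, Pi.add_apply, Pi.one_apply]
    omega
  · simp [hf.1]
  · have := (hf.2 j).2 h
    simp only [indicator_apply, mem_Iic, not_le_of_gt h, if_false, Pi.add_apply, Pi.one_apply]
    omega

theorem indicator_Iio_mem_facetAt : (Iio i).indicator 1 ∈ FacetAt i := by
  refine ⟨by simp, fun j => ⟨fun h => by simp [h], fun h => by simp [not_lt_of_gt h]⟩⟩

theorem indicator_Iic_sub_one_mem_facetAt : (Iic i).indicator 1 - 1 ∈ FacetAt i := by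
  refine ⟨by simp, fun j => ⟨fun h => by simp [h.le], fun h => by simp [not_le_of_gt h]⟩⟩

end Facet

section LowerSet

variable {r : ℕ} {I : Set (Fin r → ℤ)} {x : Fin r → ℤ}

theorem IsLowerSet.add_indicator_mem_of_subset (hI : IsLowerSet I) {s t : Set (Fin r)}
    (hst : s ⊆ t) (ht : x + t.indicator 1 ∈ I) : x + s.indicator 1 ∈ I :=
  hI (add_le_add_right (indicator_le_indicator_of_subset hst zero_le_one) x) ht

theorem IsLowerSet.add_indicator_add_one_notMem (hI : IsLowerSet I) (hx1 : x + 1 ∉ I)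
    (s : Set (Fin r)) : x + s.indicator 1 + 1 ∉ I := by
  refine fun h => hx1 (hI ?_ h)
  rw [add_right_comm]
  exact le_add_of_nonneg_right fun j => indicator_nonneg (fun _ _ => zero_le_one) j

theorem IsLowerSet.facet_subset_diff_trSet_iff (hI : IsLowerSet I) {i : Fin r} :
    {z | z - x ∈ FacetAt i} ⊆ I \ trSet I (-1) ↔
      x + (Iio i).indicator 1 ∈ I ∧ x + (Iic i).indicator 1 ∉ I := by
  simp only [subset_def, mem_ofPred_eq, mem_diff_trSet_neg_one_iff]
  constructor
  · intro h
    refine ⟨(h _ (by simpa using indicator_Iio_mem_facetAt)).1, ?_⟩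
    have := h (x + ((Iic i).indicator 1 - 1)) (by simpa using indicator_Iic_sub_one_mem_facetAt)
    rw [add_assoc, sub_add_cancel] at this
    exact this.2
  · rintro ⟨hP, hQ⟩ z hz
    refine ⟨hI ?_ hP, fun hz1 => hQ (hI ?_ hz1)⟩
    · exact sub_le_iff_le_add'.1 (le_indicator_Iio_of_mem_facetAt hz)
    · rw [← le_sub_iff_add_le', ← sub_add_eq_add_sub]
      exact indicator_Iic_le_add_one_of_mem_facetAt hz

theorem IsLowerSet.le_of_add_indicator_Iio_mem (hI : IsLowerSet I) {i j : Fin r}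
    (hQ : x + (Iic i).indicator 1 ∉ I) (hP : x + (Iio j).indicator 1 ∈ I) : j ≤ i :=
  not_lt.1 fun hij => hQ (hI.add_indicator_mem_of_subset (Iic_subset_Iio.2 hij) hP)

theorem IsLowerSet.exists_add_indicator_Iio_mem_Iic_notMem (hI : IsLowerSet I) (hx : x ∈ I)
    (hx1 : x + 1 ∉ I) :
    ∃ i : Fin r, x + (Iio i).indicator 1 ∈ I ∧ x + (Iic i).indicator 1 ∉ I := by
  classical
  obtain ⟨n, rfl⟩ : ∃ n, r = n + 1 := Nat.exists_eq_succ_of_ne_zero fun hr => by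
    subst hr
    exact hx1 (Subsingleton.elim x (x + 1) ▸ hx)
  obtain ⟨i, hi, hmax⟩ := Finset.exists_max_image
    (Finset.univ.filter fun j : Fin (n + 1) => x + (Iio j).indicator 1 ∈ I) id
    ⟨⊥, Finset.mem_filter.2 ⟨Finset.mem_univ _, by rwa [Iio_bot, indicator_empty', add_zero]⟩⟩
  refine ⟨i, (Finset.mem_filter.1 hi).2, fun hQ => ?_⟩
  by_cases hi_max : IsMax i
  · rw [hi_max.eq_top, Iic_top, indicator_univ] at hQ
    exact hx1 hQ
  · rw [← Order.Iio_succ_of_not_isMax hi_max] at hQ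
    exact hi_max <| Order.succ_le_iff_isMax.1 <|
      hmax _ (Finset.mem_filter.2 ⟨Finset.mem_univ _, hQ⟩)

end LowerSet

theorem prefixPt_eq_add_indicator {r : ℕ} (x : Fin r → ℤ) (i : Fin r) :
    prefixPt x i = x + (Iio i).indicator 1 := by
  ext j
  simp [prefixPt, indicator_apply]

/-- for `x` in a Cubist subset `X` there is a unique `i` with
`x + F_i ⊆ X`, namely `i = max{j : x + ε_1 + ... + ε_{j-1} ∈ X}`. -/
theorem vertex_facet_unique (r : ℕ) (X : Set (Fin r → ℤ)) (hX : IsCubist X)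
    (x : Fin r → ℤ) (hx : x ∈ X) :
    ∃ i : Fin r,
      ({z : Fin r → ℤ | z - x ∈ FacetAt i} ⊆ X ∧
        ∀ i' : Fin r, {z : Fin r → ℤ | z - x ∈ FacetAt i'} ⊆ X → i' = i) ∧
      IsMaxIdx X x i := by
  obtain ⟨I, -, -, hI, rfl⟩ := hX
  obtain ⟨hxI, hx1⟩ := mem_diff_trSet_neg_one_iff.1 hx
  have prefixPt_mem_iff (j : Fin r) :
      prefixPt x j ∈ I \ trSet I (-1) ↔ x + (Iio j).indicator 1 ∈ I := by
    rw [mem_diff_trSet_neg_one_iff, prefixPt_eq_add_indicator,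
      and_iff_left (hI.add_indicator_add_one_notMem hx1 _)]
  obtain ⟨i, hP, hQ⟩ := hI.exists_add_indicator_Iio_mem_Iic_notMem hxI hx1
  refine ⟨i, ⟨hI.facet_subset_diff_trSet_iff.2 ⟨hP, hQ⟩, fun i' hi' => ?_⟩,
    (prefixPt_mem_iff i).2 hP,
    fun j hj => hI.le_of_add_indicator_Iio_mem hQ ((prefixPt_mem_iff j).1 hj)⟩
  obtain ⟨hP', hQ'⟩ := hI.facet_subset_diff_trSet_iff.1 hi'
  exact le_antisymm (hI.le_of_add_indicator_Iio_mem hQ hP')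
    (hI.le_of_add_indicator_Iio_mem hQ' hP)
end

section
/- Let X be a Cubist subset of ℤ^r. Define a relation on X generated by: x ≻ y whenever y ∈ λx and y ≠ x, where λx = x + F_{i(x)} is the facet associated to x by the vertex-facet bijection. Then this relation generates a partial order on X; in particular, there are no nontrivial cycles x = x^0 ≻ x^1 ≻ ... ≻ x^l = x with l ≥ 1. -/
/-- One step of the relation generating the standard partial order:
`x ≻ y` when `y ∈ λ x` and `y ≠ x`. -/
def StepRel {r : ℕ} (X : Set (Fin r → ℤ)) (x y : Fin r → ℤ) : Prop :=
  x ∈ X ∧ y ≠ x ∧ ∃ i : Fin r, IsMaxIdx X x i ∧ y - x ∈ FacetAt i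


/-! Along a cycle `x⁰ ≻ x¹ ≻ ⋯ ≻ xˡ = x⁰` let `M` be the largest of the indices `i(xᵗ)`. A step
from a point of index `i ≤ M` increases no coordinate `c ≥ M`, so around the cycle these coordinates
are constant. A step `x ≻ y` from index `i < M` to index `M` is then impossible: `y` agrees with `x`
from `M` on, so `y + ε₁ + ⋯ + ε_{M-1} ∈ X⁻` lies above `x + ε₁ + ⋯ + ε_i`, which is outside `X`
by maximality of `i` and hence outside `X⁻`, since `x + (1, …, 1) ∉ X⁻`. So once the index drops
below `M` it stays there, and by periodicity every index equals `M`. But then no coordinate ever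
decreases, and the cycle is constant, contradicting `y ≠ x`. -/

namespace Relation.TransGen

variable {α : Type*} {R : α → α → Prop}

theorem exists_chain {a b : α} (h : TransGen R a b) :
    ∃ L, 0 < L ∧ ∃ f : ℕ → α, f 0 = a ∧ f L = b ∧ ∀ t < L, R (f t) (f (t + 1)) := by
  induction h with
  | @single c hac =>
    refine ⟨1, one_pos, fun n => if n = 0 then a else c, rfl, rfl, ?_⟩
    intro t ht
    obtain rfl : t = 0 := by omega
    simpa using hac
  | @tail b c _ hbc ih =>
    obtain ⟨L, hL, f, hf0, hfL, hf⟩ := ih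
    refine ⟨L + 1, L.succ_pos, fun n => if n ≤ L then f n else c, by simp [hf0], by simp, ?_⟩
    intro t ht
    rcases Nat.lt_succ_iff_lt_or_eq.mp ht with ht | rfl
    · simpa [ht.le, Nat.succ_le_of_lt ht] using hf t ht
    · simpa [hfL] using hbc

theorem exists_periodic_chain {a : α} (h : TransGen R a a) :
    ∃ L, 0 < L ∧ ∃ f : ℕ → α, Function.Periodic f L ∧ ∀ t, R (f t) (f (t + 1)) := by
  obtain ⟨L, hL, f, hf0, hfL, hf⟩ := h.exists_chain
  refine ⟨L, hL, fun t => f (t % L), fun t => by simp, fun t => ?_⟩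
  have hstep := hf _ (Nat.mod_lt t hL)
  show R (f (t % L)) (f ((t + 1) % L))
  rw [← (Nat.mod_modEq t L).add_right 1]
  rcases (show t % L + 1 ≤ L from Nat.mod_lt t hL).lt_or_eq with hlt | heq
  · rwa [Nat.mod_eq_of_lt hlt]
  · rw [heq] at hstep
    rwa [heq, Nat.mod_self, hf0, ← hfL]

end Relation.TransGen

namespace Function.Periodic

variable {β : Type*} {g : ℕ → β} {L : ℕ}

theorem exists_forall_le [LinearOrder β] (hg : Periodic g L) (hL : 0 < L) :
    ∃ t₀, ∀ t, g t ≤ g t₀ := by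
  obtain ⟨t₀, -, ht₀⟩ := (Finset.range L).exists_max_image g ⟨0, Finset.mem_range.mpr hL⟩
  exact ⟨t₀, fun t => hg.map_mod_nat t ▸ ht₀ _ (Finset.mem_range.mpr (Nat.mod_lt t hL))⟩

theorem eq_apply_zero_of_monotone [PartialOrder β] (hg : Periodic g L) (hL : 0 < L)
    (hmono : Monotone g) (t : ℕ) : g t = g 0 := by
  refine le_antisymm ?_ (hmono t.zero_le)
  calc g t ≤ g (t * L) := hmono (Nat.le_mul_of_pos_right t hL)
    _ = g 0 := by exact_mod_cast hg.nat_mul_eq t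

theorem eq_apply_zero_of_antitone [PartialOrder β] (hg : Periodic g L) (hL : 0 < L)
    (hanti : Antitone g) (t : ℕ) : g t = g 0 :=
  Periodic.eq_apply_zero_of_monotone (β := βᵒᵈ) hg hL hanti t

theorem forall_of_succ {p : β → Prop} (hg : Periodic g L) (hL : 0 < L)
    (hsucc : ∀ t, p (g t) → p (g (t + 1))) {s : ℕ} (hs : p (g s)) (t : ℕ) : p (g t) := by
  have hforward : ∀ n, p (g (s + n)) := fun n => Nat.rec hs (fun n ih => hsucc _ ih) n
  have hsL : s ≤ t + s * L := le_add_left (Nat.le_mul_of_pos_right s hL)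
  rw [← hg.nat_mul s t, Nat.cast_id, ← Nat.add_sub_cancel' hsL]
  exact hforward _

end Function.Periodic

section Cubist

variable {r : ℕ} {X I : Set (Fin r → ℤ)} {x y : Fin r → ℤ} {i k c : Fin r}

theorem IsMaxIdx.unique (hi : IsMaxIdx X x i) (hk : IsMaxIdx X x k) : i = k :=
  le_antisymm (hk.2 i hi.1) (hi.2 k hk.1)

theorem FacetAt.nonneg_of_le {v : Fin r → ℤ} (hv : v ∈ FacetAt i) (hc : c ≤ i) : 0 ≤ v c := by
  rcases hc.lt_or_eq with hc | rfl
  · rcases (hv.2 c).1 hc with h | h <;> omega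
  · exact hv.1.ge

theorem FacetAt.nonpos_of_ge {v : Fin r → ℤ} (hv : v ∈ FacetAt i) (hc : i ≤ c) : v c ≤ 0 := by
  rcases hc.lt_or_eq with hc | rfl
  · rcases (hv.2 c).2 hc with h | h <;> omega
  · exact hv.1.le

theorem add_one_notMem_of_mem (hX : X = I \ trSet I (-1)) (hx : x ∈ X) : x + 1 ∉ I := by
  rw [hX] at hx
  exact fun h => hx.2 ⟨x + 1, h, by ext; simp⟩

theorem prefixPt_succ_notMem (hI : IsLowerSet I) (hX : X = I \ trSet I (-1)) (hx : x ∈ X)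
    (hi : IsMaxIdx X x i) (hi1 : (i : ℕ) + 1 < r) : prefixPt x ⟨i + 1, hi1⟩ ∉ I := by
  intro hmem
  have hnotX : prefixPt x ⟨i + 1, hi1⟩ ∉ X := fun h => by
    simpa [Fin.le_def] using hi.2 _ h
  rw [hX, Set.mem_sdiff, not_and, not_not] at hnotX
  obtain ⟨w, hw, hwx⟩ := hnotX hmem
  refine add_one_notMem_of_mem hX hx (hI (fun j => ?_) hw)
  have := congrFun hwx j
  simp only [prefixPt, Pi.add_apply, Pi.one_apply] at this ⊢
  split_ifs at this <;> omega

theorem prefixPt_succ_le_prefixPt (hv : y - x ∈ FacetAt i) (hik : i < k)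
    (hfix : ∀ j, k ≤ j → y j = x j) (hi1 : (i : ℕ) + 1 < r) :
    prefixPt x ⟨i + 1, hi1⟩ ≤ prefixPt y k := by
  intro j
  have hlow : (j : ℕ) ≤ i → x j ≤ y j := fun h =>
    sub_nonneg.mp (FacetAt.nonneg_of_le hv (Fin.le_def.mpr h))
  have hmid : (i : ℕ) < j → x j ≤ y j + 1 := fun h => by
    rcases (hv.2 j).2 (Fin.lt_def.mpr h) with h | h <;> simp only [Pi.sub_apply] at h <;> omega
  have hhigh : (k : ℕ) ≤ j → y j = x j := fun h => hfix j (Fin.le_def.mpr h)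
  rw [Fin.lt_def] at hik
  simp only [prefixPt, Fin.lt_def]
  split_ifs <;> omega

theorem prefixPt_notMem_of_step (hI : IsLowerSet I) (hX : X = I \ trSet I (-1)) (hx : x ∈ X)
    (hi : IsMaxIdx X x i) (hv : y - x ∈ FacetAt i) (hik : i < k)
    (hfix : ∀ j, k ≤ j → y j = x j) : prefixPt y k ∉ X := by
  have hi1 : (i : ℕ) + 1 < r := by have := k.isLt; rw [Fin.lt_def] at hik; omega
  intro hy
  rw [hX] at hy
  exact prefixPt_succ_notMem hI hX hx hi hi1 (hI (prefixPt_succ_le_prefixPt hv hik hfix hi1) hy.1)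

theorem not_periodic_chain_stepRel (hI : IsLowerSet I) (hX : X = I \ trSet I (-1))
    {f : ℕ → Fin r → ℤ} {L : ℕ} (hL : 0 < L) (hf : Function.Periodic f L)
    (hstep : ∀ t, StepRel X (f t) (f (t + 1))) : False := by
  choose hmem hne idx hidx hv using hstep
  have hidx_per : Function.Periodic idx L := fun t => by
    have h := hidx (t + L)
    rw [hf t] at h
    exact h.unique (hidx t)
  obtain ⟨t₀, ht₀⟩ := hidx_per.exists_forall_le hL
  set M := idx t₀
  have hfix : ∀ t j, M ≤ j → f (t + 1) j = f t j := by
    intro t j hj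
    have hper : Function.Periodic (fun t => f t j) L := fun t => congrFun (hf t) j
    have hanti : Antitone (fun t => f t j) := antitone_nat_of_succ_le fun t => by
      simpa using FacetAt.nonpos_of_ge (hv t) ((ht₀ t).trans hj)
    exact (hper.eq_apply_zero_of_antitone hL hanti _).trans (hper.eq_apply_zero_of_antitone hL hanti t).symm
  have hidx_eq : ∀ t, idx t = M := by
    by_contra! ⟨s, hs⟩
    refine lt_irrefl M (hidx_per.forall_of_succ (p := (· < M)) hL (fun t ht => ?_)
      ((ht₀ s).lt_of_ne hs) t₀)
    refine (ht₀ _).lt_of_ne fun heq => ?_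
    exact prefixPt_notMem_of_step hI hX (hmem t) (hidx t) (hv t) ht (hfix t)
      (heq ▸ (hidx (t + 1)).1)
  have hmono : Monotone f := monotone_nat_of_le_succ fun t j => by
    rcases le_or_gt j M with hj | hj
    · simpa using FacetAt.nonneg_of_le (hv t) ((hidx_eq t).symm ▸ hj)
    · exact (hfix t j hj.le).ge
  exact hne 0 (hf.eq_apply_zero_of_monotone hL hmono 1)

end Cubist

/-- the relation generated by `x ≻ y` for `y ∈ λ x` has no
nontrivial cycles, hence generates a partial order on `X`. -/
theorem standard_order_acyclic (r : ℕ) (X : Set (Fin r → ℤ)) (hX : IsCubist X) :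
    ∀ x : Fin r → ℤ, ¬ Relation.TransGen (StepRel X) x x := by
  obtain ⟨I, -, -, hI, hXI⟩ := hX
  intro x hcycle
  obtain ⟨L, hL, f, hf, hstep⟩ := hcycle.exists_periodic_chain
  exact not_periodic_chain_stepRel hI hXI hL hf hstep
end

section
/- Let X be a Cubist subset of ℤ^r. Define two X×X matrices over ℤ[q]: D_U(q)_{xy} = q^{d(x,y)} if y ∈ λx and 0 otherwise; D_V(q)_{xy} = q^{d(x,y)} if y ∈ μx and 0 otherwise (entries D_V(q)_{xy} may be interpreted rowwise; all but finitely many terms in each product-sum vanish). Then D_U(q) · D_V(−q)^T = I, i.e. for all x, y ∈ X: Σ_{z ∈ λx ∩ μy} q^{d(x,z)} (−q)^{d(z,y)} equals 1 if x = y and 0 otherwise. -/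
/-- The ℓ¹ (taxicab) distance on `ℤ^r`. -/
def dist1 {r : ℕ} (x y : Fin r → ℤ) : ℕ :=
  ∑ j : Fin r, (x j - y j).natAbs

/-!
The sum factors over the coordinates: `λx ∩ μy` is a product of one-dimensional slices, and
`q^{d(x,z)} (-q)^{d(z,y)}` is a product of coordinatewise monomials. A slice has at most two
points, and when it consists of `x_j` and a neighbour of `x_j` lying between `x_j` and `y_j`, the
two monomials cancel. For `x = y` every slice is `{x_j}`. For `x ≠ y` with all slices nonempty but
none cancelling, the coordinates force `x + ε_1 + ... + ε_{i(x)} ≤ y + ε_1 + ... + ε_{i(y)-1}` or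
the same with `x` and `y` exchanged. This is impossible in a Cubist set: the left side lies in
`X⁻`, but not in `X` by maximality of `i(x)`, so it lies in `X⁻[-1]`, and then so does
`x + ε_1 + ... + ε_{i(x)-1} ∈ X`. (If `i(x) = r`, the left side is `x + (1,...,1)`, and `x ∈ X`
already excludes it from `X⁻`.)
-/

open Finset

theorem finsum_mem_univ_pi_prod {ι α R : Type*} [Fintype ι] [DecidableEq ι] [CommSemiring R]
    (T : ι → Finset α) (g : ι → α → R) :
    ∑ᶠ z ∈ Set.univ.pi (fun j => (T j : Set α)), ∏ j, g j (z j) = ∏ j, ∑ t ∈ T j, g j t := by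
  rw [← Fintype.coe_piFinset, finsum_mem_coe_finset, prod_univ_sum]

theorem sum_pair_pow_mul_neg_pow_eq_zero {R : Type*} [CommRing R] (q : R) {a a' b : ℤ}
    (h₁ : (a - a').natAbs = 1) (h₂ : (a' - b).natAbs + 1 = (a - b).natAbs) :
    ∑ t ∈ {a, a'}, q ^ (a - t).natAbs * (-q) ^ (t - b).natAbs = 0 := by
  rw [sum_pair (by omega), h₁, ← h₂, sub_self, Int.natAbs_zero]
  ring

namespace Cubist

variable {r : ℕ}

theorem pow_dist1_mul_pow_dist1 {M : Type*} [CommMonoid M] (a b : M) (x z y : Fin r → ℤ) :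
    a ^ dist1 x z * b ^ dist1 z y = ∏ j, a ^ (x j - z j).natAbs * b ^ (z j - y j).natAbs := by
  simp only [dist1, prod_mul_distrib, prod_pow_eq_pow_sum]

abbrev FacetCoord (i j : Fin r) (t : ℤ) : Prop :=
  (j = i → t = 0) ∧ (j < i → t = 0 ∨ t = 1) ∧ (i < j → t = 0 ∨ t = -1)

abbrev ConeCoord (i j : Fin r) (t : ℤ) : Prop :=
  (j < i → t ≤ 0) ∧ (i < j → 0 ≤ t)

theorem mem_facetAt_iff {i : Fin r} {z : Fin r → ℤ} :
    z ∈ FacetAt i ↔ ∀ j, FacetCoord i j (z j) := by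
  simp only [FacetAt, Set.mem_ofPred_eq, forall_and, forall_eq]

theorem mem_coneAt_iff {i : Fin r} {z : Fin r → ℤ} :
    z ∈ ConeAt i ↔ ∀ j, ConeCoord i j (z j) := by
  simp only [ConeAt, Set.mem_ofPred_eq, forall_and]

/-- The `j`-th coordinates of the points of `λx ∩ μy`. -/
def slice (x y : Fin r → ℤ) (ix iy j : Fin r) : Finset ℤ :=
  {t ∈ ({x j - 1, x j, x j + 1} : Finset ℤ) |
    FacetCoord ix j (t - x j) ∧ ConeCoord iy j (t - y j)}

variable {x y : Fin r → ℤ} {ix iy j : Fin r}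

theorem mem_slice {t : ℤ} :
    t ∈ slice x y ix iy j ↔ FacetCoord ix j (t - x j) ∧ ConeCoord iy j (t - y j) := by
  simp only [slice, mem_filter, mem_insert, mem_singleton, and_iff_right_iff_imp]
  intro h
  omega

theorem inter_eq_pi_slice (x y : Fin r → ℤ) (ix iy : Fin r) :
    {z | z - x ∈ FacetAt ix} ∩ {z | z - y ∈ ConeAt iy} =
      Set.univ.pi fun j => (slice x y ix iy j : Set ℤ) := by
  ext z
  simp only [Set.mem_inter_iff, Set.mem_ofPred_eq, mem_facetAt_iff, mem_coneAt_iff,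
    Set.mem_univ_pi, mem_coe, mem_slice, Pi.sub_apply, forall_and]

theorem slice_self (x : Fin r → ℤ) (i j : Fin r) : slice x x i i j = {x j} := by
  ext t
  simp only [mem_slice, mem_singleton]
  omega

theorem slice_eq_pair_add_one (h₁ : j < ix) (h₂ : j ≤ iy) (h₃ : x j < y j) :
    slice x y ix iy j = {x j, x j + 1} := by
  ext t
  simp only [mem_slice, mem_insert, mem_singleton]
  omega

theorem slice_eq_pair_sub_one (h₁ : ix < j) (h₂ : iy ≤ j) (h₃ : y j < x j) :
    slice x y ix iy j = {x j, x j - 1} := by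
  ext t
  simp only [mem_slice, mem_insert, mem_singleton]
  omega

section Ideal

variable {I : Set (Fin r → ℤ)}

theorem mem_trSet_neg_one {z : Fin r → ℤ} : z ∈ trSet I (-1) ↔ z + 1 ∈ I := by
  constructor
  · rintro ⟨w, hw, rfl⟩
    convert hw using 1
    funext j
    simp
  · exact fun h => ⟨_, h, by funext j; simp⟩

theorem not_succ_prefix_le (hI : IsLowerSet I) {x w : Fin r → ℤ} {i : Fin r}
    (hx : x ∈ I \ trSet I (-1)) (hi : IsMaxIdx (I \ trSet I (-1)) x i)
    (hw : w ∈ I \ trSet I (-1)) :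
    ¬ (fun j => x j + if j ≤ i then 1 else 0) ≤ w := by
  intro hle
  set u : Fin r → ℤ := fun j => x j + if j ≤ i then 1 else 0
  have hu : u ∈ I := hI hle hw.1
  by_cases hlast : (i : ℕ) + 1 < r
  · have hpre : prefixPt x ⟨i + 1, hlast⟩ = u := by
      funext j
      simp only [prefixPt, u, Fin.lt_def, Fin.le_def, Nat.lt_succ_iff]
    have hu1 : u + 1 ∈ I := by
      by_contra h
      have hmem : prefixPt x ⟨i + 1, hlast⟩ ∈ I \ trSet I (-1) :=
        hpre ▸ ⟨hu, mem_trSet_neg_one.not.mpr h⟩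
      have := hi.2 _ hmem
      simp [Fin.le_def] at this
    refine hi.1.2 (mem_trSet_neg_one.mpr (hI (fun j => ?_) hu1))
    simp only [Pi.add_apply, prefixPt, u]
    split_ifs <;> omega
  · have : u = x + 1 := by
      funext j
      simp only [u, Pi.add_apply, Pi.one_apply, Fin.le_def]
      rw [if_pos (by omega)]
    exact hx.2 (mem_trSet_neg_one.mpr (this ▸ hu))

theorem exists_cancelling_coord (hI : IsLowerSet I)
    (hx : x ∈ I \ trSet I (-1)) (hy : y ∈ I \ trSet I (-1))
    (hix : IsMaxIdx (I \ trSet I (-1)) x ix) (hiy : IsMaxIdx (I \ trSet I (-1)) y iy)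
    (hxy : x ≠ y) {z : Fin r → ℤ} (hz : ∀ j, z j ∈ slice x y ix iy j) :
    ∃ j, (j < ix ∧ j ≤ iy ∧ x j < y j) ∨ (ix < j ∧ iy ≤ j ∧ y j < x j) := by
  by_contra! hnf
  have hz j := mem_slice.mp (hz j)
  rcases lt_trichotomy ix iy with h | rfl | h
  · refine not_succ_prefix_le hI hx hix hiy.1 fun j => ?_
    have := hz j; have := hnf j
    simp only [prefixPt]
    split_ifs <;> omega
  · rcases lt_trichotomy (x ix) (y ix) with h | h | h
    · refine not_succ_prefix_le hI hx hix hiy.1 fun j => ?_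
      have : j = ix → x j < y j := by rintro rfl; exact h
      have := hz j; have := hnf j
      simp only [prefixPt]
      split_ifs <;> omega
    · refine hxy (funext fun j => ?_)
      have : j = ix → x j = y j := by rintro rfl; exact h
      have := hz j; have := hnf j
      omega
    · refine not_succ_prefix_le hI hy hiy hix.1 fun j => ?_
      have : j = ix → y j < x j := by rintro rfl; exact h
      have := hz j; have := hnf j
      simp only [prefixPt]
      split_ifs <;> omega
  · refine not_succ_prefix_le hI hy hiy hix.1 fun j => ?_
    have := hz j; have := hnf j
    simp only [prefixPt]
    split_ifs <;> omega

end Ideal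

end Cubist

open Cubist

open Polynomial in
/-- `D_U(q) · D_V(-q)ᵀ = I`, i.e. for `x, y ∈ X`,
`∑_{z ∈ λx ∩ μy} q^{d(x,z)} (-q)^{d(z,y)} = δ_{xy}`. -/
theorem decomposition_inverse (r : ℕ) (X : Set (Fin r → ℤ)) (hX : IsCubist X)
    (x y : Fin r → ℤ) (hx : x ∈ X) (hy : y ∈ X)
    (ix iy : Fin r) (hix : IsMaxIdx X x ix) (hiy : IsMaxIdx X y iy) :
    ∑ᶠ z ∈ ({z : Fin r → ℤ | z - x ∈ FacetAt ix} ∩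
        {z : Fin r → ℤ | z - y ∈ ConeAt iy}),
      ((Polynomial.X : Polynomial ℤ) ^ dist1 x z * (-Polynomial.X) ^ dist1 z y) =
      if x = y then 1 else 0 := by
  obtain ⟨I, -, -, hI, rfl⟩ := hX
  rw [inter_eq_pi_slice]
  simp_rw [pow_dist1_mul_pow_dist1]
  refine (finsum_mem_univ_pi_prod _
    fun j t => X ^ (x j - t).natAbs * (-X) ^ (t - y j).natAbs).trans ?_
  split_ifs with hxy
  · subst hxy
    obtain rfl : ix = iy := le_antisymm (hiy.2 ix hix.1) (hix.2 iy hiy.1)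
    simp [slice_self]
  · refine prod_eq_zero_iff.mpr ?_
    by_contra! hne
    choose z hz using fun j => nonempty_of_sum_ne_zero (hne j (mem_univ j))
    obtain ⟨j, ⟨h₁, h₂, h₃⟩ | ⟨h₁, h₂, h₃⟩⟩ := exists_cancelling_coord hI hx hy hix hiy hxy hz
    · refine hne j (mem_univ j) ?_
      rw [slice_eq_pair_add_one h₁ h₂ h₃]
      exact sum_pair_pow_mul_neg_pow_eq_zero _ (by omega) (by omega)
    · refine hne j (mem_univ j) ?_
      rw [slice_eq_pair_sub_one h₁ h₂ h₃]
      exact sum_pair_pow_mul_neg_pow_eq_zero _ (by omega) (by omega)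
end

section
/- Let X be a Cubist subset of ℤ^r with standard partial order ⪰ (generated by x ⪰ y for y ∈ λx). If x, y ∈ X and x ∈ μy, then x ⪰ y. -/
/-!
Write `X = X⁻ \ X⁻[-1]`. From `x`, move to the vertex of the facet `λ x` nearest to `y`: it lies
in `X` and in `μ y`, and is strictly closer to `y` in `ℓ¹`. The descent stops only once also
`y - x ∈ C_{i(x)}`, and two points of `X` each in the cone of the other coincide: if
`(i(x), x_{i(x)})` were lexicographically below `(i(y), y_{i(y)})`, then
`x + ε_1 + ⋯ + ε_{i(x)+1} ≤ y + ε_1 + ⋯ + ε_{i(y)} ∈ X⁻`, against the maximality of `i(x)`.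
-/

namespace Cubist

variable {r : ℕ} {I X : Set (Fin r → ℤ)} {x y : Fin r → ℤ} {i k : Fin r}

/-- `prefixPt x (i + 1)`, extended to the last index `i`, where it is `x + 1`. -/
def prefixPtSucc (x : Fin r → ℤ) (i : Fin r) : Fin r → ℤ :=
  fun j => x j + if j ≤ i then 1 else 0

lemma mem_trSet_neg_one_iff : x ∈ trSet I (-1) ↔ x + 1 ∈ I := by
  constructor
  · rintro ⟨w, hw, rfl⟩
    convert hw using 1
    funext j
    simp
  · exact fun h => ⟨x + 1, h, by funext j; simp⟩

lemma mem_iff_of_eq_diff (hXI : X = I \ trSet I (-1)) : x ∈ X ↔ x ∈ I ∧ x + 1 ∉ I := by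
  rw [hXI, Set.mem_sdiff, mem_trSet_neg_one_iff]

lemma prefixPt_mem_of_isMaxIdx (hXI : X = I \ trSet I (-1)) (hi : IsMaxIdx X x i) :
    prefixPt x i ∈ I :=
  ((mem_iff_of_eq_diff hXI).1 hi.1).1

lemma prefixPtSucc_not_mem_of_isMaxIdx (hI : IsLowerSet I) (hXI : X = I \ trSet I (-1))
    (hx : x ∈ X) (hi : IsMaxIdx X x i) : prefixPtSucc x i ∉ I := by
  have hx1 : x + 1 ∉ I := ((mem_iff_of_eq_diff hXI).1 hx).2
  by_cases hlast : i.1 + 1 < r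
  · set i' : Fin r := ⟨i.1 + 1, hlast⟩
    have hsucc : prefixPtSucc x i = prefixPt x i' := by
      funext j
      simp only [prefixPtSucc, prefixPt, i', Fin.le_def, Fin.lt_def, Nat.lt_succ_iff]
    rw [hsucc]
    intro hmem
    -- `prefixPt x i' + 1 ≥ x + 1 ∉ I`, so `prefixPt x i' ∈ X`, against the maximality of `i`
    have hnext : prefixPt x i' + 1 ∉ I := fun h =>
      hx1 (hI (fun j => by simp only [Pi.add_apply, Pi.one_apply, prefixPt]; split <;> omega) h)
    have := hi.2 i' ((mem_iff_of_eq_diff hXI).2 ⟨hmem, hnext⟩)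
    simp only [i', Fin.le_def] at this
    omega
  · have hall : prefixPtSucc x i = x + 1 := by
      funext j
      have hj : j ≤ i := Fin.le_def.2 (by omega)
      simp [prefixPtSucc, hj]
    rwa [hall]

lemma add_le_prefixPt_of_mem_facetAt {f : Fin r → ℤ} (hf : f ∈ FacetAt i) :
    x + f ≤ prefixPt x i := by
  intro j
  have := hf.2 j
  simp only [Pi.add_apply, prefixPt]
  rcases lt_trichotomy j i with h | rfl | h
  · simp only [h, if_true]; omega
  · simp only [lt_irrefl, if_false]; have := hf.1; omega
  · simp only [not_lt_of_gt h, if_false]; omega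

lemma prefixPtSucc_le_add_of_mem_facetAt {f : Fin r → ℤ} (hf : f ∈ FacetAt i) :
    prefixPtSucc x i ≤ x + f + 1 := by
  intro j
  have := hf.2 j
  simp only [Pi.add_apply, Pi.one_apply, prefixPtSucc]
  rcases lt_trichotomy j i with h | rfl | h
  · simp only [h.le, if_true]; omega
  · simp only [le_refl, if_true]; have := hf.1; omega
  · simp only [not_le_of_gt h, if_false]; omega

lemma add_mem_of_mem_facetAt (hI : IsLowerSet I) (hXI : X = I \ trSet I (-1)) (hx : x ∈ X)
    (hi : IsMaxIdx X x i) {f : Fin r → ℤ} (hf : f ∈ FacetAt i) : x + f ∈ X :=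
  (mem_iff_of_eq_diff hXI).2
    ⟨hI (add_le_prefixPt_of_mem_facetAt hf) (prefixPt_mem_of_isMaxIdx hXI hi),
      fun h => prefixPtSucc_not_mem_of_isMaxIdx hI hXI hx hi
        (hI (prefixPtSucc_le_add_of_mem_facetAt hf) h)⟩

lemma exists_isMaxIdx (hr : 0 < r) (hx : x ∈ X) : ∃ i, IsMaxIdx X x i := by
  classical
  let S : Finset (Fin r) := {j | prefixPt x j ∈ X}
  have hzero : prefixPt x ⟨0, hr⟩ = x := by
    funext j
    simp [prefixPt, Fin.lt_def]
  have hS : S.Nonempty := ⟨⟨0, hr⟩, by simpa [S, hzero]⟩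
  refine ⟨S.max' hS, (Finset.mem_filter.1 (S.max'_mem hS)).2, fun j hj => ?_⟩
  exact S.le_max' j (Finset.mem_filter.2 ⟨Finset.mem_univ j, hj⟩)

lemma prefixPtSucc_le_prefixPt (hxy : x - y ∈ ConeAt k) (hyx : y - x ∈ ConeAt i)
    (hlex : i < k ∨ i = k ∧ x i < y i) : prefixPtSucc x i ≤ prefixPt y k := by
  intro j
  have h₁ := hxy.1 j
  have h₂ := hyx.2 j
  simp only [Pi.sub_apply] at h₁ h₂
  simp only [prefixPtSucc, prefixPt]
  rcases hlex with hik | ⟨rfl, hlt⟩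
  · rcases lt_or_ge i j with h | h
    · simp only [not_le_of_gt h, if_false]
      split <;> omega
    · simp only [h, lt_of_le_of_lt h hik, if_true]
      omega
  · rcases lt_trichotomy j i with h | rfl | h
    · simp only [h, h.le, if_true]; omega
    · simp only [le_refl, lt_irrefl, if_true, if_false]; omega
    · simp only [not_le_of_gt h, not_lt_of_gt h, if_false]; omega

lemma not_lexLT_of_sub_mem_coneAt (hI : IsLowerSet I) (hXI : X = I \ trSet I (-1))
    (hx : x ∈ X) (hi : IsMaxIdx X x i) (hk : IsMaxIdx X y k)
    (hxy : x - y ∈ ConeAt k) (hyx : y - x ∈ ConeAt i) : ¬(i < k ∨ i = k ∧ x i < y i) :=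
  fun hlex => prefixPtSucc_not_mem_of_isMaxIdx hI hXI hx hi
    (hI (prefixPtSucc_le_prefixPt hxy hyx hlex) (prefixPt_mem_of_isMaxIdx hXI hk))

lemma eq_of_sub_mem_coneAt (hI : IsLowerSet I) (hXI : X = I \ trSet I (-1))
    (hx : x ∈ X) (hy : y ∈ X) (hi : IsMaxIdx X x i) (hk : IsMaxIdx X y k)
    (hxy : x - y ∈ ConeAt k) (hyx : y - x ∈ ConeAt i) : x = y := by
  have h₁ := not_lexLT_of_sub_mem_coneAt hI hXI hx hi hk hxy hyx
  have h₂ := not_lexLT_of_sub_mem_coneAt hI hXI hy hk hi hyx hxy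
  obtain rfl : i = k := by
    rcases lt_trichotomy i k with h | h | h <;> simp_all
  have hxi : x i = y i := by
    rcases lt_trichotomy (x i) (y i) with h | h | h <;> simp_all
  funext j
  rcases lt_trichotomy j i with h | rfl | h
  · have := hxy.1 j h; have := hyx.1 j h
    simp only [Pi.sub_apply] at *; omega
  · exact hxi
  · have := hxy.2 j h; have := hyx.2 j h
    simp only [Pi.sub_apply] at *; omega

/-- `x + stepToward i x y` is the vertex of `x + F_i` nearest to `y`. -/
def stepToward (i : Fin r) (x y : Fin r → ℤ) : Fin r → ℤ :=
  fun j => if j < i ∧ x j < y j then 1 else if i < j ∧ y j < x j then -1 else 0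

lemma stepToward_apply_cases (j : Fin r) :
    stepToward i x y j = 0 ∧ ¬(j < i ∧ x j < y j) ∧ ¬(i < j ∧ y j < x j) ∨
      stepToward i x y j = 1 ∧ j < i ∧ x j < y j ∨
      stepToward i x y j = -1 ∧ i < j ∧ y j < x j := by
  unfold stepToward
  split_ifs <;> simp_all

lemma stepToward_mem_facetAt : stepToward i x y ∈ FacetAt i := by
  refine ⟨?_, fun j => ⟨fun hj => ?_, fun hj => ?_⟩⟩
  · rcases stepToward_apply_cases (x := x) (y := y) (i := i) i with h | h | h <;> omega
  all_goals rcases stepToward_apply_cases (x := x) (y := y) (i := i) j with h | h | h <;> omega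

lemma sub_mem_coneAt_of_stepToward_eq_zero (h : stepToward i x y = 0) : y - x ∈ ConeAt i := by
  refine ⟨fun j hj => ?_, fun j hj => ?_⟩ <;>
  · have := congrFun h j
    rcases stepToward_apply_cases (x := x) (y := y) (i := i) j with h | h | h <;>
      simp only [Pi.sub_apply, Pi.zero_apply] at * <;> omega

lemma add_stepToward_sub_mem_coneAt (hxy : x - y ∈ ConeAt k) :
    x + stepToward i x y - y ∈ ConeAt k := by
  refine ⟨fun j hj => ?_, fun j hj => ?_⟩
  · have := hxy.1 j hj
    rcases stepToward_apply_cases (x := x) (y := y) (i := i) j with h | h | h <;>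
      simp only [Pi.sub_apply, Pi.add_apply] at * <;> omega
  · have := hxy.2 j hj
    rcases stepToward_apply_cases (x := x) (y := y) (i := i) j with h | h | h <;>
      simp only [Pi.sub_apply, Pi.add_apply] at * <;> omega

lemma sum_natAbs_add_stepToward_lt (h : stepToward i x y ≠ 0) :
    ∑ j, ((x + stepToward i x y) j - y j).natAbs < ∑ j, (x j - y j).natAbs := by
  obtain ⟨j₀, hj₀⟩ := Function.ne_iff.1 h
  refine Finset.sum_lt_sum (fun j _ => ?_) ⟨j₀, Finset.mem_univ _, ?_⟩
  · rcases stepToward_apply_cases (x := x) (y := y) (i := i) j with h | h | h <;>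
      simp only [Pi.add_apply] <;> omega
  · rcases stepToward_apply_cases (x := x) (y := y) (i := i) j₀ with h | h | h <;>
      simp only [Pi.add_apply, Pi.zero_apply] at * <;> omega

theorem reflTransGen_stepRel_of_sub_mem_coneAt (hI : IsLowerSet I)
    (hXI : X = I \ trSet I (-1)) {x y : Fin r → ℤ} {k : Fin r} (hx : x ∈ X) (hy : y ∈ X)
    (hk : IsMaxIdx X y k) (hxy : x - y ∈ ConeAt k) : Relation.ReflTransGen (StepRel X) x y := by
  obtain ⟨i, hi⟩ := exists_isMaxIdx k.pos hx
  by_cases hstop : stepToward i x y = 0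
  · rw [eq_of_sub_mem_coneAt hI hXI hx hy hi hk hxy (sub_mem_coneAt_of_stepToward_eq_zero hstop)]
  · have hstep : StepRel X x (x + stepToward i x y) :=
      ⟨hx, fun h => hstop (by simpa using h), i, hi, by simpa using stepToward_mem_facetAt⟩
    exact .head hstep <| reflTransGen_stepRel_of_sub_mem_coneAt hI hXI
      (add_mem_of_mem_facetAt hI hXI hx hi stepToward_mem_facetAt) hy hk
      (add_stepToward_sub_mem_coneAt hxy)
termination_by ∑ j, (x j - y j).natAbs
decreasing_by exact sum_natAbs_add_stepToward_lt hstop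

end Cubist

/-- if `x ∈ μ y` then `x ⪰ y` in the standard partial order
(the reflexive-transitive closure of the facet relation). -/
theorem cone_implies_order (r : ℕ) (X : Set (Fin r → ℤ)) (hX : IsCubist X)
    (x y : Fin r → ℤ) (hx : x ∈ X) (hy : y ∈ X)
    (iy : Fin r) (hiy : IsMaxIdx X y iy) (hmu : x - y ∈ ConeAt iy) :
    Relation.ReflTransGen (StepRel X) x y := by
  obtain ⟨I, -, -, hI, hXI⟩ := hX
  exact Cubist.reflTransGen_stepRel_of_sub_mem_coneAt hI hXI hx hy hiy hmu
end

section
/- Let X be a Cubist subset of ℤ^r and z ∈ X. The following are equivalent: (1) z is a maximal element of X with respect to the componentwise order ≤; (2) for all x ∈ ℤ^r, if z − (1,...,1) < x ≤ z then x ∈ X; (3) the subset X' obtained from X by replacing z with z − (1,...,1) is again a Cubist subset of ℤ^r. -/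
/-!
Write `X = {y ∈ I | y + 1 ∉ I}` for the ideal `I`. Anything in `I` above a point `z ∈ X` is
again in `X`, so `z` is maximal in `X` iff it is maximal in `I`.

(1 ⇔ 2) If `z` is maximal and `z - 1 < x ≤ z`, then `x + 1 ∈ I` would force `x + 1 = z`.
Conversely, if `z < w ∈ X`, then `x = z ⊓ (w - 1)` lies in the box `(z - 1, z]` while
`x + 1 ≤ w ∈ I`, so `x ∉ X`.

(1 ⇔ 3) Removing a maximal `z` from `I` leaves an ideal whose top layer is `X` with `z`
replaced by `z - 1`. Conversely, if `X'` is the top layer of an ideal `J`, then `z - 1 ∈ X'`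
gives `z ∉ J`, so no `w ≥ z` lies in `X' ⊆ J`.
-/

open Set

/-- For `e = (1,…,1)` and a lower set `I ⊆ ℤ^r` this is the paper's `I \ I[-1]`. -/
def topLayer {α : Type*} [Add α] (e : α) (I : Set α) : Set α := {y ∈ I | y + e ∉ I}

section TopLayer

variable {α : Type*} {e : α} {I : Set α} {x z w : α}

lemma ne_zero_of_mem_topLayer [AddZeroClass α] (hz : z ∈ topLayer e I) : e ≠ 0 := by
  rintro rfl
  exact hz.2 (by rw [add_zero]; exact hz.1)

lemma IsLowerSet.notMem_topLayer_of_add_le [Add α] [LE α] (hI : IsLowerSet I) (hw : w ∈ I)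
    (hxw : x + e ≤ w) : x ∉ topLayer e I :=
  fun hx => hx.2 (hI hxw hw)

lemma IsLowerSet.not_le_of_sub_mem_topLayer [AddGroup α] [LE α] (hI : IsLowerSet I)
    (hz : z - e ∈ topLayer e I) (hw : w ∈ I) : ¬ z ≤ w := by
  intro hzw
  exact hz.2 (by rw [sub_add_cancel]; exact hI hzw hw)

lemma topLayer_diff_singleton [AddGroup α] (he0 : e ≠ 0) (hsub : z - e ∈ I) :
    topLayer e (I \ {z}) = (topLayer e I \ {z}) ∪ {z - e} := by
  ext y
  by_cases hy : y = z - e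
  · subst hy
    simp [topLayer, hsub, sub_eq_self, he0]
  · have hyz : y + e ≠ z := fun h => hy (eq_sub_iff_add_eq.mpr h)
    simp only [topLayer, mem_sdiff, mem_ofPred_eq, mem_singleton_iff, mem_union, hy, hyz,
      or_false, not_and, not_not, imp_false]
    tauto

variable [AddCommGroup α] [PartialOrder α] [IsOrderedAddMonoid α]

lemma IsLowerSet.sub_mem_diff_singleton (hI : IsLowerSet I) (he : 0 ≤ e) (he0 : e ≠ 0)
    (hz : z ∈ I) : z - e ∈ I \ {z} :=
  ⟨hI (sub_le_self z he) hz, fun h => he0 (sub_eq_self.mp h)⟩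

lemma IsLowerSet.eq_of_le_of_maximal_topLayer (hI : IsLowerSet I) (hz : z ∈ topLayer e I)
    (hmax : ∀ w ∈ topLayer e I, z ≤ w → w = z) : ∀ a ∈ I, z ≤ a → a = z :=
  fun a ha hza => hmax a ⟨ha, fun ha' => hz.2 (hI (add_le_add_left hza e) ha')⟩ hza

lemma IsLowerSet.Ioc_sub_subset_topLayer (hI : IsLowerSet I) (hz : z ∈ topLayer e I)
    (hmax : ∀ w ∈ topLayer e I, z ≤ w → w = z) : Ioc (z - e) z ⊆ topLayer e I := by
  rintro x ⟨hzx, hxz⟩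
  refine ⟨hI hxz hz.1, fun hx => hzx.ne ?_⟩
  have hxe : x + e = z :=
    hI.eq_of_le_of_maximal_topLayer hz hmax _ hx (sub_le_iff_le_add.mp hzx.le)
  exact (eq_sub_iff_add_eq.mpr hxe).symm

end TopLayer

lemma Pi.exists_mem_Ioc_sub_one_add_one_le_of_lt {ι : Type*} {z w : ι → ℤ} (h : z < w) :
    ∃ x ∈ Ioc (z - 1) z, x + 1 ≤ w := by
  obtain ⟨hzw, i, hi⟩ := Pi.lt_def.mp h
  have hzw : ∀ j, z j ≤ w j := hzw
  refine ⟨z ⊓ (w - 1), ⟨Pi.lt_def.mpr ⟨fun j => ?_, i, ?_⟩, inf_le_left⟩, fun j => ?_⟩ <;>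
    simp only [Pi.add_apply, Pi.sub_apply, Pi.one_apply, Pi.inf_apply] <;> grind

lemma IsLowerSet.eq_of_Ioc_sub_one_subset_topLayer {ι : Type*} {I : Set (ι → ℤ)}
    {z : ι → ℤ} (hI : IsLowerSet I) (hbox : Ioc (z - 1) z ⊆ topLayer 1 I) :
    ∀ w ∈ topLayer 1 I, z ≤ w → w = z := by
  intro w hw hzw
  by_contra hne
  obtain ⟨x, hx, hxw⟩ :=
    Pi.exists_mem_Ioc_sub_one_add_one_le_of_lt (lt_of_le_of_ne hzw (Ne.symm hne))
  exact hI.notMem_topLayer_of_add_le hw.1 hxw (hbox hx)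

lemma mem_trSet_neg_one {r : ℕ} {S : Set (Fin r → ℤ)} {y : Fin r → ℤ} :
    y ∈ trSet S (-1) ↔ y + 1 ∈ S := by
  constructor
  · rintro ⟨x, hx, rfl⟩
    rwa [show (x + fun _ => (-1 : ℤ)) + 1 = x from neg_add_cancel_right x 1]
  · exact fun h => ⟨y + 1, h, by ext; simp⟩

lemma diff_trSet_neg_one {r : ℕ} (I : Set (Fin r → ℤ)) : I \ trSet I (-1) = topLayer 1 I := by
  ext y
  simp [topLayer, mem_trSet_neg_one]

/-- for `z` in a Cubist subset `X`, the following are equivalent: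
(1) `z` is maximal in `X` for the componentwise order; (2) every `x` with
`z - (1,...,1) < x ≤ z` lies in `X`; (3) replacing `z` by `z - (1,...,1)` yields
a Cubist subset. -/
theorem flip_equivalences (r : ℕ) (X : Set (Fin r → ℤ)) (hX : IsCubist X)
    (z : Fin r → ℤ) (hz : z ∈ X) :
    ((∀ w ∈ X, z ≤ w → w = z) ↔
      (∀ x : Fin r → ℤ, z - 1 < x → x ≤ z → x ∈ X)) ∧
    ((∀ w ∈ X, z ≤ w → w = z) ↔ IsCubist ((X \ {z}) ∪ {z - 1})) := by
  obtain ⟨I, -, -, hI, rfl⟩ := hX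
  rw [diff_trSet_neg_one] at hz ⊢
  have h10 : (1 : Fin r → ℤ) ≠ 0 := ne_zero_of_mem_topLayer hz
  have hsub := hI.sub_mem_diff_singleton zero_le_one h10 hz.1
  refine ⟨⟨fun hmax x hzx hxz => hI.Ioc_sub_subset_topLayer hz hmax ⟨hzx, hxz⟩,
    fun hbox => hI.eq_of_Ioc_sub_one_subset_topLayer fun x hx => hbox x hx.1 hx.2⟩,
    fun hmax => ?_, ?_⟩
  · refine ⟨I \ {z}, ⟨z - 1, hsub⟩, fun h => (h ▸ mem_univ z).2 rfl,
      hI.erase (hI.eq_of_le_of_maximal_topLayer hz hmax), ?_⟩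
    rw [diff_trSet_neg_one, topLayer_diff_singleton h10 hsub.1]
  · rintro ⟨J, -, -, hJ, hX'⟩ w hw hzw
    rw [diff_trSet_neg_one] at hX'
    by_contra hne
    have hwJ : w ∈ topLayer 1 J := hX' ▸ (Or.inl ⟨hw, hne⟩ : w ∈ topLayer 1 I \ {z} ∪ {z - 1})
    have hzJ : z - 1 ∈ topLayer 1 J := hX' ▸ (Or.inr rfl : z - 1 ∈ topLayer 1 I \ {z} ∪ {z - 1})
    exact hJ.not_le_of_sub_mem_topLayer hzJ hwJ.1 hzw
end

section
/- Let X be a Cubist subset of ℤ^r. For x ∈ X define I_X(x) = { z ∈ X : x ≤ z ≤ x + (1,...,1) } (componentwise order). Let S ⊆ {1,...,r} and i ∉ S, and let F be the facet consisting of all x' ∈ ℤ^r with x − Σ_{j∉S∪{i}} ε_j ≤ x' ≤ x + Σ_{j∈S} ε_j (an (r−1)-cube containing x). Then F ⊆ X if and only if x + Σ_{j∈S} ε_j ∈ X and x + Σ_{j∈S∪{i}} ε_j ∉ X. In particular, whether F ⊆ X depends only on I_X(x). -/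
lemma trSet_neg_one_eq_preimage {r : ℕ} (I : Set (Fin r → ℤ)) :
    trSet I (-1) = (· + 1) ⁻¹' I := by
  rw [trSet, Set.image_add_right]
  rfl

theorem IsLowerSet.Icc_subset_diff_preimage_add_iff {α : Type*} [Preorder α] [Add α]
    [AddRightMono α] {I : Set α} (hI : IsLowerSet I) {u a b : α} (hab : a ≤ b)
    (hba : b ≤ a + u) :
    Set.Icc a b ⊆ I \ (· + u) ⁻¹' I ↔ b ∈ I \ (· + u) ⁻¹' I ∧ a + u ∉ I \ (· + u) ⁻¹' I := by
  constructor
  · intro h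
    exact ⟨h ⟨hab, le_rfl⟩, fun hau => (h ⟨le_rfl, hab⟩).2 hau.1⟩
  · rintro ⟨⟨hbI, hbu⟩, hau⟩ y ⟨hay, hyb⟩
    refine ⟨hI hyb hbI, fun hyu => hbu ?_⟩
    have hauI : a + u ∈ I := hI (add_le_add_left hay u) hyu
    have hauu : a + u + u ∈ I := not_not.mp fun h => hau ⟨hauI, h⟩
    exact hI (add_le_add_left hba u) hauu

theorem facet_in_cubist_iff_general (r : ℕ) (X : Set (Fin r → ℤ)) (hX : IsCubist X)
    (x : Fin r → ℤ) (S : Finset (Fin r)) (i : Fin r) :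
    {x' : Fin r → ℤ | ∀ j : Fin r,
        x j - (if j ∈ S ∨ j = i then 0 else 1) ≤ x' j ∧
        x' j ≤ x j + (if j ∈ S then 1 else 0)} ⊆ X ↔
      ((fun j => x j + if j ∈ S then 1 else 0) ∈ X ∧
        (fun j => x j + if j ∈ S ∨ j = i then 1 else 0) ∉ X) := by
  obtain ⟨I, -, -, hI, rfl⟩ := hX
  set a : Fin r → ℤ := fun j => x j - if j ∈ S ∨ j = i then 0 else 1
  set b : Fin r → ℤ := fun j => x j + if j ∈ S then 1 else 0
  have hF : {x' : Fin r → ℤ | ∀ j : Fin r, a j ≤ x' j ∧ x' j ≤ b j} = Set.Icc a b := by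
    ext y; simp [Pi.le_def, forall_and]
  have hc : (fun j => x j + if j ∈ S ∨ j = i then 1 else 0) = a + 1 := by
    ext j; simp only [a, Pi.add_apply, Pi.one_apply]; split_ifs <;> grind
  have hab : a ≤ b := fun j => by simp only [a, b]; split_ifs <;> grind
  have hba : b ≤ a + 1 := fun j => by
    simp only [a, b, Pi.add_apply, Pi.one_apply]; split_ifs <;> grind
  rw [trSet_neg_one_eq_preimage, hc]
  exact hF ▸ hI.Icc_subset_diff_preimage_add_iff hab hba

/-- a facet `F = {x' : x - ∑_{j∉S∪{i}} ε_j ≤ x' ≤ x + ∑_{j∈S} ε_j}`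
containing `x ∈ X` is contained in `X` iff `x + ∑_{j∈S} ε_j ∈ X` and
`x + ∑_{j∈S∪{i}} ε_j ∉ X`. -/
theorem facet_in_cubist_iff (r : ℕ) (X : Set (Fin r → ℤ)) (hX : IsCubist X)
    (x : Fin r → ℤ) (hx : x ∈ X) (S : Finset (Fin r)) (i : Fin r) (hi : i ∉ S) :
    {x' : Fin r → ℤ | ∀ j : Fin r,
        x j - (if j ∈ S ∨ j = i then 0 else 1) ≤ x' j ∧
        x' j ≤ x j + (if j ∈ S then 1 else 0)} ⊆ X ↔
      ((fun j => x j + if j ∈ S then 1 else 0) ∈ X ∧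
        (fun j => x j + if j ∈ S ∨ j = i then 1 else 0) ∉ X) :=
  facet_in_cubist_iff_general r X hX x S i
end

section
/- Let P be the set {(u,v) ∈ ℤ² : 0 ≤ u < v ≤ p−1} and let P_B ⊆ P be any 'pyramid', i.e. a subset such that (u,v) ∈ P_B and u < w < v imply (u,w) ∈ P_B and (w,v) ∈ P_B. Define x_B(u,v) = (−u−1, v, 0) if (u,v) ∈ ℤ², u < v, (u,v) ∉ P_B, and x_B(u,v) = (−u, v+1, 1) if (u,v) ∈ P_B. Then X_B := Im(x_B) ∪ {(i,j,1) ∈ ℤ³ : i + j ≤ 1} is a Cubist subset of ℤ³; specifically X_B⁻ := ℤ×ℤ×ℤ_{≤0} ∪ {(i,j,1) : i+j ≤ 1 or (−i, j−1) ∈ P_B} is a nonempty proper ideal of ℤ³ with X_B = X_B⁻ \ X_B⁻[−1]. -/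
/-!
The ideal `X_B⁻` is a half-space `z ≤ 0` topped by a slice at height `1`, which is downward
closed because a pyramid contains, with `(u, v)`, every `(u', v')` such that `u ≤ u' < v' ≤ v`.
Shifting by `(1, 1, 1)` moves that slice to height `2`, so all of it survives in
`X_B⁻ \ X_B⁻[−1]`, and of the half-space only the points at height `0` survive whose
shift lies outside the slice; these are exactly the points `x_B(u, v)` with `(u, v) ∉ P_B`.
-/

section Pyramid

variable {α : Type*} [PartialOrder α]

def IsPyramid (PB : Set (α × α)) : Prop :=
  ∀ u v w : α, (u, v) ∈ PB → u < w → w < v → (u, w) ∈ PB ∧ (w, v) ∈ PB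

theorem IsPyramid.mem_of_le {PB : Set (α × α)} (hPB : IsPyramid PB) {u v u' v' : α}
    (h : (u, v) ∈ PB) (hu : u ≤ u') (hv : v' ≤ v) (huv : u' < v') : (u', v') ∈ PB := by
  have h' : (u', v) ∈ PB := by
    rcases hu.eq_or_lt with rfl | hu
    · exact h
    · exact (hPB u v u' h hu (huv.trans_le hv)).2
  rcases hv.eq_or_lt with rfl | hv
  · exact h'
  · exact (hPB u' v v' h' huv hv).1

end Pyramid

namespace BlockCubist

variable {PB : Set (ℤ × ℤ)}

/-- `X_B⁻` -/
def ideal (PB : Set (ℤ × ℤ)) : Set (ℤ × ℤ × ℤ) :=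
  {w | w.2.2 ≤ 0} ∪ {w | w.2.2 = 1 ∧ (w.1 + w.2.1 ≤ 1 ∨ (-w.1, w.2.1 - 1) ∈ PB)}

/-- `X_B = Im(x_B) ∪ {(i, j, 1) : i + j ≤ 1}` -/
def cubist (PB : Set (ℤ × ℤ)) : Set (ℤ × ℤ × ℤ) :=
  {w | (∃ u v : ℤ, u < v ∧ (u, v) ∉ PB ∧ w = (-u - 1, v, 0)) ∨
    (∃ u v : ℤ, (u, v) ∈ PB ∧ w = (-u, v + 1, 1)) ∨ (w.2.2 = 1 ∧ w.1 + w.2.1 ≤ 1)}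

theorem mem_ideal {a b c : ℤ} :
    (a, b, c) ∈ ideal PB ↔ c ≤ 0 ∨ c = 1 ∧ (a + b ≤ 1 ∨ (-a, b - 1) ∈ PB) :=
  Iff.rfl

theorem ideal_nonempty : (ideal PB).Nonempty :=
  ⟨(0, 0, 0), mem_ideal.2 (Or.inl le_rfl)⟩

theorem ideal_ne_univ : ideal PB ≠ Set.univ := fun h => by
  have h2 : ((0 : ℤ), (0 : ℤ), (2 : ℤ)) ∈ ideal PB := h ▸ Set.mem_univ _
  rcases mem_ideal.1 h2 with h2 | ⟨h2, -⟩ <;> omega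

theorem isLowerSet_ideal (hPB : IsPyramid PB) : IsLowerSet (ideal PB) := by
  rintro ⟨a, b, c⟩ ⟨a', b', c'⟩ hle h
  obtain ⟨ha, hb, hc⟩ : a' ≤ a ∧ b' ≤ b ∧ c' ≤ c := hle
  rw [mem_ideal] at h ⊢
  rcases le_or_gt c' 0 with hc' | hc'
  · exact Or.inl hc'
  rcases h with h | ⟨rfl, h | h⟩
  · omega
  · exact Or.inr ⟨by omega, Or.inl (by omega)⟩
  · refine Or.inr ⟨by omega, ?_⟩
    rcases le_or_gt (a' + b') 1 with hab | hab
    · exact Or.inl hab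
    · exact Or.inr (hPB.mem_of_le h (by omega) (by omega) (by omega))

theorem mem_ideal_diff_shift {a b c : ℤ} :
    (a, b, c) ∈ ideal PB \ (fun w => w - (1, 1, 1)) '' ideal PB ↔
      (c = 0 ∧ -a - 1 < b ∧ (-a - 1, b) ∉ PB) ∨
        c = 1 ∧ (a + b ≤ 1 ∨ (-a, b - 1) ∈ PB) := by
  rw [Set.image_sub_right, Set.mem_sdiff, Set.mem_preimage, Prod.mk_add_mk, Prod.mk_add_mk,
    mem_ideal, mem_ideal, show -(a + 1) = -a - 1 by ring, show b + 1 - 1 = b by ring]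
  constructor
  · rintro ⟨h | h, hshift⟩
    · have hc : c = 0 := by omega
      subst hc
      simp only [zero_add, true_and, not_or] at hshift
      obtain ⟨-, hab, hn⟩ := hshift
      exact Or.inl ⟨rfl, by omega, hn⟩
    · exact Or.inr h
  · rintro (⟨rfl, hab, hn⟩ | ⟨rfl, h⟩)
    · refine ⟨Or.inl le_rfl, ?_⟩
      rintro (h | ⟨-, h | h⟩)
      · omega
      · omega
      · exact hn h
    · exact ⟨Or.inr ⟨rfl, h⟩, by omega⟩

theorem mem_cubist {a b c : ℤ} :
    (a, b, c) ∈ cubist PB ↔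
      (c = 0 ∧ -a - 1 < b ∧ (-a - 1, b) ∉ PB) ∨
        c = 1 ∧ (a + b ≤ 1 ∨ (-a, b - 1) ∈ PB) := by
  have h₀ : (∃ u v : ℤ, u < v ∧ (u, v) ∉ PB ∧ (a, b, c) = (-u - 1, v, 0)) ↔
      c = 0 ∧ -a - 1 < b ∧ (-a - 1, b) ∉ PB := by
    constructor
    · rintro ⟨u, v, huv, hn, h⟩
      simp only [Prod.mk.injEq] at h
      obtain ⟨rfl, rfl, rfl⟩ := h
      rw [show -(-u - 1) - 1 = u by ring]
      exact ⟨rfl, huv, hn⟩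
    · rintro ⟨rfl, hab, hn⟩
      exact ⟨-a - 1, b, hab, hn, by simp⟩
  have h₁ : (∃ u v : ℤ, (u, v) ∈ PB ∧ (a, b, c) = (-u, v + 1, 1)) ↔
      c = 1 ∧ (-a, b - 1) ∈ PB := by
    constructor
    · rintro ⟨u, v, h, he⟩
      simp only [Prod.mk.injEq] at he
      obtain ⟨rfl, rfl, rfl⟩ := he
      rw [neg_neg, add_sub_cancel_right]
      exact ⟨rfl, h⟩
    · rintro ⟨rfl, h⟩
      exact ⟨-a, b - 1, h, by simp⟩
  rw [cubist, Set.mem_ofPred_eq, h₀, h₁]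
  tauto

end BlockCubist

theorem block_cubist_general (PB : Set (ℤ × ℤ))
    (hpyr : ∀ u v w : ℤ, (u, v) ∈ PB → u < w → w < v →
      (u, w) ∈ PB ∧ (w, v) ∈ PB) :
    Set.Nonempty ({w : ℤ × ℤ × ℤ | w.2.2 ≤ 0} ∪
        {w : ℤ × ℤ × ℤ | w.2.2 = 1 ∧ (w.1 + w.2.1 ≤ 1 ∨ (-w.1, w.2.1 - 1) ∈ PB)}) ∧
    ({w : ℤ × ℤ × ℤ | w.2.2 ≤ 0} ∪
        {w : ℤ × ℤ × ℤ | w.2.2 = 1 ∧ (w.1 + w.2.1 ≤ 1 ∨ (-w.1, w.2.1 - 1) ∈ PB)}) ≠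
      Set.univ ∧
    IsLowerSet ({w : ℤ × ℤ × ℤ | w.2.2 ≤ 0} ∪
        {w : ℤ × ℤ × ℤ | w.2.2 = 1 ∧ (w.1 + w.2.1 ≤ 1 ∨ (-w.1, w.2.1 - 1) ∈ PB)}) ∧
    {w : ℤ × ℤ × ℤ |
        (∃ u v : ℤ, u < v ∧ (u, v) ∉ PB ∧ w = (-u - 1, v, 0)) ∨
        (∃ u v : ℤ, (u, v) ∈ PB ∧ w = (-u, v + 1, 1)) ∨
        (w.2.2 = 1 ∧ w.1 + w.2.1 ≤ 1)} =
      ({w : ℤ × ℤ × ℤ | w.2.2 ≤ 0} ∪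
          {w : ℤ × ℤ × ℤ | w.2.2 = 1 ∧ (w.1 + w.2.1 ≤ 1 ∨ (-w.1, w.2.1 - 1) ∈ PB)}) \
        ((fun w : ℤ × ℤ × ℤ => w - (1, 1, 1)) ''
          ({w : ℤ × ℤ × ℤ | w.2.2 ≤ 0} ∪
            {w : ℤ × ℤ × ℤ | w.2.2 = 1 ∧ (w.1 + w.2.1 ≤ 1 ∨ (-w.1, w.2.1 - 1) ∈ PB)})) := by
  refine ⟨BlockCubist.ideal_nonempty, BlockCubist.ideal_ne_univ,
    BlockCubist.isLowerSet_ideal hpyr, ?_⟩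
  ext ⟨a, b, c⟩
  exact BlockCubist.mem_cubist.trans BlockCubist.mem_ideal_diff_shift.symm

/-- for a pyramid `P_B ⊆ P = {(u,v) : 0 ≤ u < v ≤ p-1}`, the set
`X_B = Im(x_B) ∪ {(i,j,1) : i+j ≤ 1}` is a Cubist subset of `ℤ³`, via the
nonempty proper ideal
`X_B⁻ = ℤ×ℤ×ℤ_{≤0} ∪ {(i,j,1) : i+j ≤ 1 or (-i,j-1) ∈ P_B}`. -/
theorem block_cubist (p : ℤ) (hp : 2 ≤ p) (PB : Set (ℤ × ℤ))
    (hsub : PB ⊆ {uv : ℤ × ℤ | 0 ≤ uv.1 ∧ uv.1 < uv.2 ∧ uv.2 ≤ p - 1})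
    (hpyr : ∀ u v w : ℤ, (u, v) ∈ PB → u < w → w < v →
      (u, w) ∈ PB ∧ (w, v) ∈ PB) :
    Set.Nonempty ({w : ℤ × ℤ × ℤ | w.2.2 ≤ 0} ∪
        {w : ℤ × ℤ × ℤ | w.2.2 = 1 ∧ (w.1 + w.2.1 ≤ 1 ∨ (-w.1, w.2.1 - 1) ∈ PB)}) ∧
    ({w : ℤ × ℤ × ℤ | w.2.2 ≤ 0} ∪
        {w : ℤ × ℤ × ℤ | w.2.2 = 1 ∧ (w.1 + w.2.1 ≤ 1 ∨ (-w.1, w.2.1 - 1) ∈ PB)}) ≠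
      Set.univ ∧
    IsLowerSet ({w : ℤ × ℤ × ℤ | w.2.2 ≤ 0} ∪
        {w : ℤ × ℤ × ℤ | w.2.2 = 1 ∧ (w.1 + w.2.1 ≤ 1 ∨ (-w.1, w.2.1 - 1) ∈ PB)}) ∧
    {w : ℤ × ℤ × ℤ |
        (∃ u v : ℤ, u < v ∧ (u, v) ∉ PB ∧ w = (-u - 1, v, 0)) ∨
        (∃ u v : ℤ, (u, v) ∈ PB ∧ w = (-u, v + 1, 1)) ∨
        (w.2.2 = 1 ∧ w.1 + w.2.1 ≤ 1)} =
      ({w : ℤ × ℤ × ℤ | w.2.2 ≤ 0} ∪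
          {w : ℤ × ℤ × ℤ | w.2.2 = 1 ∧ (w.1 + w.2.1 ≤ 1 ∨ (-w.1, w.2.1 - 1) ∈ PB)}) \
        ((fun w : ℤ × ℤ × ℤ => w - (1, 1, 1)) ''
          ({w : ℤ × ℤ × ℤ | w.2.2 ≤ 0} ∪
            {w : ℤ × ℤ × ℤ | w.2.2 = 1 ∧ (w.1 + w.2.1 ≤ 1 ∨ (-w.1, w.2.1 - 1) ∈ PB)})) :=
  block_cubist_general PB hpyr
end
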